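/- arXiv:1705.00984 — 3 statements merged into one kernel-verified Lean document; each statement's English description precedes it below -/
import Mathlib

section
/- Pumping lemma for context-free languages: for every context-free grammar G there exists a constant k (depending only on G) such that every string x ∈ L(G) with |x| > k admits a factorization x = y w₁ z w₂ u with w₁w₂ ≠ ε such that y w₁ⁿ z w₂ⁿ u ∈ L(G) for every n ≥ 0. -/
/-! Take a parse tree of `x` with the fewest internal nodes. Every node has fewer than
`b := branchingBound` children, so if `|x| > b ^ N`, where `N` counts the nonterminals occurring
as left-hand sides, one can descend from the root, always into a child whose yield is longer than
`b ^ (N - 1)`, `b ^ (N - 2)`, …, along a branch with `N + 1` internal nodes. Two of them carry the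
same nonterminal `C`: the upper one spans `w₁ z w₂` and the lower one `z`. Replacing the lower
subtree by `n` nested copies of the part of the tree between the two nodes pumps `w₁` and `w₂`;
and `w₁ w₂ ≠ ε`, since otherwise replacing the upper subtree by the lower one would give a
smaller parse tree of `x`. -/

namespace ContextFreeGrammar

variable {T : Type*} {g : ContextFreeGrammar T}

/-- `g.ParseForest s w n`: the symbols of `s` have parse trees with `n` internal nodes in total
(that is, `n` rule applications) and concatenated yield `w`. -/
inductive ParseForest (g : ContextFreeGrammar T) : List (Symbol T g.NT) → List T → ℕ → Prop
  | nil : g.ParseForest [] [] 0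
  | terminal (a : T) {s w n} : g.ParseForest s w n → g.ParseForest (.terminal a :: s) (a :: w) n
  | nonterminal {r : ContextFreeRule T g.NT} (hr : r ∈ g.rules) {s u w m n} :
      g.ParseForest r.output u m → g.ParseForest s w n →
      g.ParseForest (.nonterminal r.input :: s) (u ++ w) (m + 1 + n)

namespace ParseForest

lemma singleton {r : ContextFreeRule T g.NT} (hr : r ∈ g.rules) {w : List T} {m : ℕ}
    (h : g.ParseForest r.output w m) : g.ParseForest [.nonterminal r.input] w (m + 1) := by
  simpa using nonterminal hr h nil

lemma append {s₁ s₂ : List (Symbol T g.NT)} {w₁ w₂ : List T} {n₁ n₂ : ℕ}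
    (h₁ : g.ParseForest s₁ w₁ n₁) (h₂ : g.ParseForest s₂ w₂ n₂) :
    g.ParseForest (s₁ ++ s₂) (w₁ ++ w₂) (n₁ + n₂) := by
  induction h₁ with
  | nil => simpa using h₂
  | terminal a _ ih => exact terminal a ih
  | nonterminal hr hu _ _ ih =>
    simpa [List.append_assoc, Nat.add_assoc] using nonterminal hr hu ih

lemma exists_of_append {s₁ s₂ : List (Symbol T g.NT)} {w : List T} {n : ℕ}
    (h : g.ParseForest (s₁ ++ s₂) w n) :
    ∃ w₁ w₂ n₁ n₂, w = w₁ ++ w₂ ∧ n = n₁ + n₂ ∧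
      g.ParseForest s₁ w₁ n₁ ∧ g.ParseForest s₂ w₂ n₂ := by
  induction s₁ generalizing w n with
  | nil => exact ⟨[], w, 0, n, rfl, by simp, nil, h⟩
  | cons x s₁ ih =>
    rcases h with _ | ⟨a, h⟩ | ⟨hr, hu, h⟩
    · obtain ⟨w₁, w₂, n₁, n₂, rfl, rfl, h₁, h₂⟩ := ih h
      exact ⟨a :: w₁, w₂, n₁, n₂, rfl, rfl, terminal a h₁, h₂⟩
    · obtain ⟨w₁, w₂, n₁, n₂, rfl, rfl, h₁, h₂⟩ := ih h
      exact ⟨_ ++ w₁, w₂, _ + 1 + n₁, n₂, by simp, by omega, nonterminal hr hu h₁, h₂⟩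

lemma map_terminal (w : List T) : g.ParseForest (w.map .terminal) w 0 := by
  induction w with
  | nil => exact nil
  | cons a w ih => exact terminal a ih

lemma exists_rule_of_singleton {A : g.NT} {w : List T} {n : ℕ}
    (h : g.ParseForest [.nonterminal A] w n) :
    ∃ r ∈ g.rules, r.input = A ∧ ∃ m, n = m + 1 ∧ g.ParseForest r.output w m := by
  rcases h with _ | _ | ⟨hr, hu, h⟩
  rcases h with _ | _ | _
  exact ⟨_, hr, rfl, _, rfl, by simpa using hu⟩

lemma of_produces {u v : List (Symbol T g.NT)} {w : List T} {n : ℕ} (huv : g.Produces u v)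
    (hv : g.ParseForest v w n) : g.ParseForest u w (n + 1) := by
  obtain ⟨r, hr, hrw⟩ := huv
  obtain ⟨p, q, rfl, rfl⟩ := hrw.exists_parts
  obtain ⟨w₁, w', n₁, n', rfl, rfl, hp, hv⟩ := exists_of_append (s₁ := p) (by simpa using hv)
  obtain ⟨w₂, w₃, n₂, n₃, rfl, rfl, hr', hq⟩ := exists_of_append hv
  have h := hp.append ((singleton hr hr').append hq)
  rw [show n₁ + (n₂ + 1 + n₃) = n₁ + (n₂ + n₃) + 1 by omega] at h
  simpa using h

lemma derives {s : List (Symbol T g.NT)} {w : List T} {n : ℕ} (h : g.ParseForest s w n) :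
    g.Derives s (w.map .terminal) := by
  induction h with
  | nil => rfl
  | terminal a _ ih => simpa using ih.append_left [.terminal a]
  | @nonterminal r hr s u w _ _ _ _ ihu ihw =>
    have hstep : g.Produces [.nonterminal r.input] r.output :=
      ⟨r, hr, ContextFreeRule.Rewrites.input_output⟩
    have := (hstep.trans_derives ihu).append_right s |>.trans (ihw.append_left _)
    simpa using this

end ParseForest

lemma exists_parseForest_of_derives {s : List (Symbol T g.NT)} {w : List T}
    (h : g.Derives s (w.map .terminal)) : ∃ n, g.ParseForest s w n := by
  induction h using Relation.ReflTransGen.head_induction_on with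
  | refl => exact ⟨0, .map_terminal w⟩
  | head huv _ ih =>
    obtain ⟨n, hv⟩ := ih
    exact ⟨n + 1, hv.of_produces huv⟩

variable (g) in
/-- A parse forest of `s` with one leaf `B` left unexpanded, given by its defining property:
plugging in a parse tree of `B` with yield `v` and `c` nodes gives a parse forest of `s` with
yield `y ++ v ++ u` and `a + c` nodes. -/
def IsContext (s : List (Symbol T g.NT)) (y : List T) (B : g.NT) (u : List T) (a : ℕ) : Prop :=
  ∀ ⦃v c⦄, g.ParseForest [.nonterminal B] v c → g.ParseForest s (y ++ v ++ u) (a + c)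

namespace IsContext

lemma hole (B : g.NT) : g.IsContext [.nonterminal B] [] B [] 0 := by
  intro v c h
  simpa using h

lemma trans {s : List (Symbol T g.NT)} {y u y' u' : List T} {B C : g.NT} {a a' : ℕ}
    (h : g.IsContext s y B u a) (h' : g.IsContext [.nonterminal B] y' C u' a') :
    g.IsContext s (y ++ y') C (u' ++ u) (a + a') := by
  intro v c hv
  simpa [List.append_assoc, Nat.add_assoc] using h (h' hv)

lemma pow {C : g.NT} {w₁ w₂ : List T} {b : ℕ} (h : g.IsContext [.nonterminal C] w₁ C w₂ b)
    (n : ℕ) :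
    g.IsContext [.nonterminal C] (List.replicate n w₁).flatten C
      (List.replicate n w₂).flatten (n * b) := by
  induction n with
  | zero => simpa using hole C
  | succ n ih =>
    have := h.trans ih
    rwa [← List.flatten_cons, ← List.replicate_succ, ← List.flatten_concat,
      ← List.replicate_succ', Nat.add_comm b, ← Nat.succ_mul] at this

lemma terminal {s : List (Symbol T g.NT)} {y u : List T} {B : g.NT} {a : ℕ}
    (h : g.IsContext s y B u a) (t : T) : g.IsContext (.terminal t :: s) (t :: y) B u a :=
  fun _ _ hv => .terminal t (h hv)

lemma nonterminal {r : ContextFreeRule T g.NT} (hr : r ∈ g.rules) {s : List (Symbol T g.NT)}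
    {x y u : List T} {B : g.NT} {m a : ℕ} (hx : g.ParseForest r.output x m)
    (h : g.IsContext s y B u a) :
    g.IsContext (.nonterminal r.input :: s) (x ++ y) B u (m + 1 + a) := by
  intro v c hv
  simpa [List.append_assoc, Nat.add_assoc] using ParseForest.nonterminal hr hx (h hv)

lemma head {s : List (Symbol T g.NT)} {w : List T} {n : ℕ} (B : g.NT)
    (h : g.ParseForest s w n) : g.IsContext (.nonterminal B :: s) [] B w n := by
  intro v c hv
  simpa [Nat.add_comm n] using hv.append h

lemma singleton {r : ContextFreeRule T g.NT} (hr : r ∈ g.rules) {y u : List T} {B : g.NT}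
    {a : ℕ} (h : g.IsContext r.output y B u a) :
    g.IsContext [.nonterminal r.input] y B u (a + 1) := by
  intro v c hv
  simpa [Nat.add_right_comm a] using ParseForest.singleton hr (h hv)

end IsContext

variable (g) in
/-- A parse tree of `g`, recorded by its root, its yield and its number of internal nodes. -/
structure ParseTree where
  root : g.NT
  yield : List T
  size : ℕ
  parseForest : g.ParseForest [.nonterminal root] yield size

variable (g) in
def branchingBound : ℕ := g.rules.sup (fun r => r.output.length) + 1

lemma branchingBound_pos : 0 < g.branchingBound := Nat.succ_pos _

lemma length_output_lt_branchingBound {r : ContextFreeRule T g.NT} (hr : r ∈ g.rules) :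
    r.output.length < g.branchingBound :=
  Nat.lt_succ_of_le (Finset.le_sup (f := fun r => r.output.length) hr)

lemma ParseForest.exists_long_tree {s : List (Symbol T g.NT)} {w : List T} {n : ℕ}
    (h : g.ParseForest s w n) {M : ℕ} (hM : 0 < M) (hw : s.length * M < w.length) :
    ∃ (t : g.ParseTree) (y u : List T) (a : ℕ), w = y ++ t.yield ++ u ∧ n = a + t.size ∧
      g.IsContext s y t.root u a ∧ M < t.yield.length := by
  induction h with
  | nil => simp at hw
  | terminal b _ ih =>
    simp only [List.length_cons, Nat.succ_mul] at hw
    obtain ⟨t, y, u, a, rfl, rfl, hctx, ht⟩ := ih (by omega)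
    exact ⟨t, b :: y, u, a, rfl, rfl, hctx.terminal b, ht⟩
  | @nonterminal r hr s x w m n hx hw' _ ih =>
    simp only [List.length_cons, Nat.succ_mul, List.length_append] at hw
    by_cases hlong : M < x.length
    · exact ⟨⟨r.input, x, m + 1, .singleton hr hx⟩, [], w, n, by simp, Nat.add_comm _ _,
        IsContext.head _ hw', hlong⟩
    · obtain ⟨t, y, u, a, rfl, rfl, hctx, ht⟩ := ih (by omega)
      exact ⟨t, x ++ y, u, m + 1 + a, by simp, by omega, hctx.nonterminal hr hx, ht⟩

namespace ParseTree

/-- `t.Embeds t'`: `t'` occurs as a subtree of `t`, and any parse tree with root `t'.root` may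
be substituted for it. -/
def Embeds (t t' : g.ParseTree) : Prop :=
  ∃ y u a, t.yield = y ++ t'.yield ++ u ∧ t.size = a + t'.size ∧
    g.IsContext [.nonterminal t.root] y t'.root u a

lemma Embeds.refl (t : g.ParseTree) : t.Embeds t :=
  ⟨[], [], 0, by simp, by simp, IsContext.hole _⟩

lemma Embeds.trans {t₁ t₂ t₃ : g.ParseTree} (h₁₂ : t₁.Embeds t₂) (h₂₃ : t₂.Embeds t₃) :
    t₁.Embeds t₃ := by
  obtain ⟨y, u, a, hy, ha, hctx⟩ := h₁₂
  obtain ⟨y', u', a', hy', ha', hctx'⟩ := h₂₃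
  exact ⟨y ++ y', u' ++ u, a + a', by simp [hy, hy'], by omega, hctx.trans hctx'⟩

def HasSelfEmbedding (t : g.ParseTree) : Prop :=
  ∃ t₁ t₂ : g.ParseTree, t.Embeds t₁ ∧ t₁.Embeds t₂ ∧ t₂.root = t₁.root ∧ t₂.size < t₁.size

lemma HasSelfEmbedding.of_embeds {t t' : g.ParseTree} (h : t.Embeds t')
    (h' : t'.HasSelfEmbedding) : t.HasSelfEmbedding := by
  obtain ⟨t₁, t₂, h₁, h₂⟩ := h'
  exact ⟨t₁, t₂, h.trans h₁, h₂⟩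

lemma root_mem_inputs [DecidableEq g.NT] (t : g.ParseTree) :
    t.root ∈ g.rules.image (·.input) := by
  obtain ⟨r, hr, hroot, -⟩ := t.parseForest.exists_rule_of_singleton
  exact Finset.mem_image.mpr ⟨r, hr, hroot⟩

lemma exists_long_subtree (t : g.ParseTree) {M : ℕ} (hM : 0 < M)
    (hw : g.branchingBound * M < t.yield.length) :
    ∃ t' : g.ParseTree, t'.size < t.size ∧ t.Embeds t' ∧ M < t'.yield.length := by
  obtain ⟨r, hr, hroot, m, hsize, hforest⟩ := t.parseForest.exists_rule_of_singleton
  have hbranch : r.output.length * M < t.yield.length :=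
    lt_of_le_of_lt (Nat.mul_le_mul_right M (length_output_lt_branchingBound hr).le) hw
  obtain ⟨t', y, u, a, hy, hm, hctx, hlong⟩ := hforest.exists_long_tree hM hbranch
  refine ⟨t', by omega, ⟨y, u, a + 1, hy, by omega, ?_⟩, hlong⟩
  rw [← hroot]
  exact hctx.singleton hr

/-- Descend `k` times into a subtree whose yield is longer than `branchingBound ^ i`: either a
root repeats along the way, or `k` distinct roots below `t.root` are met. -/
theorem hasSelfEmbedding_or_exists_roots [DecidableEq g.NT] (t : g.ParseTree) (k : ℕ)
    (hw : g.branchingBound ^ k < t.yield.length) :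
    t.HasSelfEmbedding ∨ ∃ V : Finset g.NT, V.card = k ∧ t.root ∉ V ∧
      ∀ B ∈ V, ∃ t' : g.ParseTree, t'.root = B ∧ t'.size < t.size ∧ t.Embeds t' := by
  induction k generalizing t with
  | zero => exact .inr ⟨∅, rfl, by simp, by simp⟩
  | succ k ih =>
    rw [pow_succ'] at hw
    obtain ⟨t', hsize, hemb, hlong⟩ := t.exists_long_subtree (pow_pos g.branchingBound_pos k) hw
    obtain hself | ⟨V, hcard, hroot, hV⟩ := ih t' hlong
    · exact .inl (hself.of_embeds hemb)
    have hV' : ∀ B ∈ insert t'.root V,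
        ∃ t'' : g.ParseTree, t''.root = B ∧ t''.size < t.size ∧ t.Embeds t'' := by
      intro B hB
      rcases Finset.mem_insert.mp hB with rfl | hB
      · exact ⟨t', rfl, hsize, hemb⟩
      · obtain ⟨t'', rfl, hsize', hemb'⟩ := hV B hB
        exact ⟨t'', rfl, hsize'.trans hsize, hemb.trans hemb'⟩
    by_cases hrep : t.root ∈ insert t'.root V
    · obtain ⟨t'', hroot', hsize', hemb'⟩ := hV' _ hrep
      exact .inl ⟨t, t'', .refl t, hemb', hroot', hsize'⟩
    · exact .inr ⟨insert t'.root V, by rw [Finset.card_insert_of_notMem hroot, hcard], hrep, hV'⟩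

theorem hasSelfEmbedding_of_lt_length [DecidableEq g.NT] (t : g.ParseTree)
    (hw : g.branchingBound ^ (g.rules.image (·.input)).card < t.yield.length) :
    t.HasSelfEmbedding := by
  refine (t.hasSelfEmbedding_or_exists_roots _ hw).resolve_right ?_
  rintro ⟨V, hcard, hroot, hV⟩
  have hsub : insert t.root V ⊆ g.rules.image (·.input) := by
    intro B hB
    rcases Finset.mem_insert.mp hB with rfl | hB
    · exact t.root_mem_inputs
    · obtain ⟨t', rfl, -⟩ := hV _ hB
      exact t'.root_mem_inputs
  have := Finset.card_le_card hsub
  rw [Finset.card_insert_of_notMem hroot] at this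
  omega

theorem HasSelfEmbedding.exists_pumping {t : g.ParseTree} (h : t.HasSelfEmbedding)
    (hmin : ∀ m, g.ParseForest [.nonterminal t.root] t.yield m → t.size ≤ m) :
    ∃ y w₁ z w₂ u : List T, t.yield = y ++ w₁ ++ z ++ w₂ ++ u ∧ w₁ ++ w₂ ≠ [] ∧
      ∀ n : ℕ, ∃ m, g.ParseForest [.nonterminal t.root]
        (y ++ (List.replicate n w₁).flatten ++ z ++ (List.replicate n w₂).flatten ++ u) m := by
  obtain ⟨t₁, t₂, ⟨y, u, a, hy, ha, hctx⟩, ⟨w₁, w₂, b, hy₁, hb, hloop⟩, hroot, hsize⟩ := h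
  rw [hroot] at hloop
  have hinner : g.ParseForest [.nonterminal t₁.root] t₂.yield t₂.size :=
    hroot ▸ t₂.parseForest
  refine ⟨y, w₁, t₂.yield, w₂, u, by simp [hy, hy₁], ?_, fun n => ?_⟩
  · intro hempty
    obtain ⟨rfl, rfl⟩ := List.append_eq_nil_iff.mp hempty
    have := hmin _ (by simpa [hy, hy₁] using hctx hinner)
    omega
  · exact ⟨_, by simpa [List.append_assoc] using hctx (hloop.pow n hinner)⟩

end ParseTree

lemma exists_minimal_parseTree {A : g.NT} {w : List T}
    (h : g.Derives [.nonterminal A] (w.map .terminal)) :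
    ∃ t : g.ParseTree, t.root = A ∧ t.yield = w ∧
      ∀ m, g.ParseForest [.nonterminal t.root] t.yield m → t.size ≤ m := by
  classical
  have hex := exists_parseForest_of_derives h
  exact ⟨⟨A, w, Nat.find hex, Nat.find_spec hex⟩, rfl, rfl, fun m hm => Nat.find_min' hex hm⟩

end ContextFreeGrammar

/-- **Pumping lemma for context-free languages.**
For every context-free grammar `G` there exists a constant `k` (depending only on `G`)
such that every string `x ∈ L(G)` with `|x| > k` admits a factorization
`x = y w₁ z w₂ u` with `w₁w₂ ≠ ε` such that `y w₁ⁿ z w₂ⁿ u ∈ L(G)` for every `n ≥ 0`. -/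
theorem contextFree_pumping_lemma {T : Type} (G : ContextFreeGrammar.{0} T) :
    ∃ k : ℕ, ∀ x ∈ G.language, k < x.length →
      ∃ y w₁ z w₂ u : List T,
        x = y ++ w₁ ++ z ++ w₂ ++ u ∧
        w₁ ++ w₂ ≠ [] ∧
        ∀ n : ℕ,
          y ++ (List.replicate n w₁).flatten ++ z ++ (List.replicate n w₂).flatten ++ u
            ∈ G.language := by
  classical
  refine ⟨G.branchingBound ^ (G.rules.image (·.input)).card, fun x hx hlen => ?_⟩
  obtain ⟨t, hroot, rfl, hmin⟩ :=
    ContextFreeGrammar.exists_minimal_parseTree ((G.mem_language_iff x).mp hx)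
  obtain ⟨y, w₁, z, w₂, u, hx, hne, hpump⟩ :=
    (t.hasSelfEmbedding_of_lt_length hlen).exists_pumping hmin
  refine ⟨y, w₁, z, w₂, u, hx, hne, fun n => ?_⟩
  obtain ⟨m, hm⟩ := hpump n
  rw [ContextFreeGrammar.mem_language_iff, ← hroot]
  exact hm.derives
end

section
/- Greibach normal form: for every context-free grammar G there exists a context-free grammar G' in Greibach normal form — i.e., the right-hand side of every production of G' belongs to Σ V_N* (a terminal character followed by a possibly empty string of nonterminals) — such that L(G') = L(G) \ {ε}. -/
/-!
Left-corner construction, argued semantically. Besides the nonterminals `A` of `G`, now generating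
`L(A) \ {ε}`, the new grammar has a nonterminal `⟨A, Z⟩` for the nonempty words `w` with
`A ⇒* Z w` along a left spine whose left siblings are all nullable, and a nonterminal for each
terminal of `G`. Splitting a word at the rule that produces its first letter, and a spine word at
the lowest spine step producing a nonempty word, shows that each of these languages `L` is a union
of sets `a · L(n₁) ⋯ L(nⱼ) ⊆ L` with `j ≤ 2 m + 2`, `m` the longest right-hand side of `G`. Taking
as rules all such sound right-hand sides over nonterminals with nonempty language yields a finite
grammar in Greibach normal form whose languages satisfy the same fixed-point equations; as every
rule consumes a terminal, these equations have only one solution (induction on word length).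
-/

theorem Set.Finite.setOf_length_le_forall_mem {α : Type*} {S : Set α} (hS : S.Finite) (k : ℕ) :
    {l : List α | l.length ≤ k ∧ ∀ x ∈ l, x ∈ S}.Finite := by
  have := hS.to_subtype
  refine ((List.finite_length_le S k).image (List.map Subtype.val)).subset ?_
  rintro l ⟨hl, hS⟩
  lift l to List S using hS
  exact ⟨l, by simpa using hl, rfl⟩

namespace Language

variable {α N : Type*} (L : N → Language α)

def ProdCovered (k : ℕ) (M : Language α) : Prop :=
  ∀ w ∈ M, ∃ ns : List N, ns.length ≤ k ∧ w ∈ (ns.map L).prod ∧ (ns.map L).prod ≤ M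

/-- The witnesses `a`, `ns` are right-hand sides `a n₁ ⋯ nⱼ` of Greibach rules for `M`. -/
def GNFCovered (k : ℕ) (M : Language α) : Prop :=
  ∀ w ∈ M, ∃ (a : α) (ns : List N) (u : List α), ns.length ≤ k ∧ u ∈ (ns.map L).prod ∧ w = a :: u ∧
    ∀ v ∈ (ns.map L).prod, a :: v ∈ M

variable {L} {k k₁ k₂ : ℕ} {M M₁ M₂ : Language α}

theorem mem_sub_one {w : List α} : w ∈ M - 1 ↔ w ∈ M ∧ w ≠ [] := by
  simp [mem_sub, mem_one]

theorem nonempty_of_mem_prod {ns : List N} {u : List α} (hu : u ∈ (ns.map L).prod) {n : N}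
    (hn : n ∈ ns) : (L n).Nonempty := by
  induction ns generalizing u with
  | nil => cases hn
  | cons m ns ih =>
    obtain ⟨v, hv, v', hv', rfl⟩ := hu
    obtain rfl | hn := List.mem_cons.mp hn
    · exact ⟨v, hv⟩
    · exact ih hv' hn

theorem prod_nonempty {ns : List N} (h : ∀ n ∈ ns, (L n).Nonempty) :
    ((ns.map L).prod).Nonempty := by
  induction ns with
  | nil => exact ⟨[], (mem_one _).mpr rfl⟩
  | cons m ns ih =>
    obtain ⟨v, hv⟩ := h m List.mem_cons_self
    obtain ⟨v', hv'⟩ := ih fun n hn => h n (List.mem_cons_of_mem _ hn)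
    exact ⟨v ++ v', append_mem_mul hv hv'⟩

theorem prodCovered_one : ProdCovered L 0 1 :=
  fun w hw => ⟨[], le_rfl, by simpa using hw, by simp⟩

theorem prodCovered_of_eq_sub_one {n : N} (h : L n = M - 1) :
    ProdCovered L 1 M := by
  intro w hw
  obtain rfl | hw₀ := eq_or_ne w []
  · exact ⟨[], Nat.zero_le _, (mem_one _).mpr rfl, fun v hv => by rwa [(mem_one v).mp hv]⟩
  · exact ⟨[n], le_rfl, by simpa [h, mem_sub_one] using ⟨hw, hw₀⟩, by simp [h]⟩

theorem ProdCovered.mono (h : ProdCovered L k M) (hk : k ≤ k₁) : ProdCovered L k₁ M :=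
  fun w hw => (h w hw).imp fun _ ⟨hl, hmem, hle⟩ => ⟨hl.trans hk, hmem, hle⟩

theorem ProdCovered.mul (h₁ : ProdCovered L k₁ M₁) (h₂ : ProdCovered L k₂ M₂) :
    ProdCovered L (k₁ + k₂) (M₁ * M₂) := by
  rintro _ ⟨w₁, hw₁, w₂, hw₂, rfl⟩
  obtain ⟨ns₁, hl₁, hm₁, hle₁⟩ := h₁ w₁ hw₁
  obtain ⟨ns₂, hl₂, hm₂, hle₂⟩ := h₂ w₂ hw₂
  exact ⟨ns₁ ++ ns₂, by rw [List.length_append]; omega, by simpa using append_mem_mul hm₁ hm₂,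
    by simpa using mul_le_mul' hle₁ hle₂⟩

theorem gnfCovered_singleton (a : α) : GNFCovered L 0 {[a]} := by
  rintro w rfl
  exact ⟨a, [], [], le_rfl, (mem_one _).mpr rfl, rfl, fun v hv => by rw [(mem_one v).mp hv]; rfl⟩

theorem GNFCovered.mono (h : GNFCovered L k M) (hk : k ≤ k₁) : GNFCovered L k₁ M :=
  fun w hw => (h w hw).imp fun _ ⟨ns, u, hl, hrest⟩ => ⟨ns, u, hl.trans hk, hrest⟩

theorem GNFCovered.of_local (h : ∀ w ∈ M, ∃ M' ≤ M, w ∈ M' ∧ GNFCovered L k M') :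
    GNFCovered L k M := by
  intro w hw
  obtain ⟨M', hle, hw', hM'⟩ := h w hw
  exact (hM' w hw').imp fun a ⟨ns, u, hl, hu, hwu, hsound⟩ =>
    ⟨ns, u, hl, hu, hwu, fun v hv => hle (hsound v hv)⟩

theorem GNFCovered.mul (h₁ : GNFCovered L k₁ M₁) (h₂ : ProdCovered L k₂ M₂) :
    GNFCovered L (k₁ + k₂) (M₁ * M₂) := by
  rintro _ ⟨w₁, hw₁, w₂, hw₂, rfl⟩
  obtain ⟨a, ns₁, u, hl₁, hu, rfl, hsound⟩ := h₁ w₁ hw₁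
  obtain ⟨ns₂, hl₂, hm₂, hle₂⟩ := h₂ w₂ hw₂
  refine ⟨a, ns₁ ++ ns₂, u ++ w₂, by rw [List.length_append]; omega, by simpa using append_mem_mul hu hm₂, rfl, ?_⟩
  intro v hv
  simp only [List.map_append, List.prod_append] at hv
  obtain ⟨v₁, hv₁, v₂, hv₂, rfl⟩ := hv
  exact append_mem_mul (hsound v₁ hv₁) (hle₂ hv₂)

end Language

namespace ContextFreeGrammar

section General

variable {T : Type*} {g : ContextFreeGrammar T}

inductive Yields (g : ContextFreeGrammar T) : List (Symbol T g.NT) → List T → Prop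
  | nil : Yields g [] []
  | terminal (a : T) {β : List (Symbol T g.NT)} {w : List T} :
      Yields g β w → Yields g (.terminal a :: β) (a :: w)
  | nonterminal {A : g.NT} {β γ : List (Symbol T g.NT)} {v w : List T} :
      ⟨A, β⟩ ∈ g.rules → Yields g β v → Yields g γ w → Yields g (.nonterminal A :: γ) (v ++ w)

namespace Yields

variable {α β γ : List (Symbol T g.NT)} {u v w : List T}

theorem append (h₁ : g.Yields α v) (h₂ : g.Yields β w) : g.Yields (α ++ β) (v ++ w) := by
  induction h₁ with
  | nil => exact h₂
  | terminal a _ ih => exact .terminal a ih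
  | nonterminal hr hβ _ _ ih => simpa using nonterminal hr hβ ih

theorem of_append (h : g.Yields (α ++ β) w) :
    ∃ w₁ w₂, w = w₁ ++ w₂ ∧ g.Yields α w₁ ∧ g.Yields β w₂ := by
  induction α generalizing w with
  | nil => exact ⟨[], w, rfl, nil, h⟩
  | cons s α ih =>
    cases h with
    | terminal a h =>
      obtain ⟨w₁, w₂, rfl, h₁, h₂⟩ := ih h
      exact ⟨a :: w₁, w₂, rfl, .terminal a h₁, h₂⟩
    | nonterminal hr hβ h =>
      obtain ⟨w₁, w₂, rfl, h₁, h₂⟩ := ih h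
      exact ⟨_ ++ w₁, w₂, by simp, .nonterminal hr hβ h₁, h₂⟩

theorem singleton_nonterminal_iff {A : g.NT} :
    g.Yields [.nonterminal A] w ↔ ∃ β, ⟨A, β⟩ ∈ g.rules ∧ g.Yields β w := by
  constructor
  · rintro (_ | _ | ⟨hr, hβ, ⟨⟩⟩)
    exact ⟨_, hr, by simpa⟩
  · rintro ⟨β, hr, hβ⟩
    simpa using nonterminal hr hβ nil

theorem singleton_terminal_iff {a : T} : g.Yields [.terminal a] w ↔ w = [a] := by
  constructor
  · rintro (_ | ⟨_, ⟨⟩⟩)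
    rfl
  · rintro rfl
    exact .terminal a nil

theorem map_terminal (w : List T) : g.Yields (w.map .terminal) w := by
  induction w with
  | nil => exact nil
  | cons a w ih => exact .terminal a ih

theorem of_produces (hp : g.Produces α β) (h : g.Yields β w) : g.Yields α w := by
  obtain ⟨r, hr, hrw⟩ := hp
  obtain ⟨p, q, rfl, rfl⟩ := hrw.exists_parts
  obtain ⟨w₁₂, w₃, rfl, h₁₂, h₃⟩ := of_append h
  obtain ⟨w₁, w₂, rfl, h₁, h₂⟩ := of_append h₁₂
  exact (h₁.append (singleton_nonterminal_iff.mpr ⟨_, hr, h₂⟩)).append h₃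

theorem derives (h : g.Yields β w) : g.Derives β (w.map .terminal) := by
  induction h with
  | nil => exact .refl []
  | terminal a _ ih => simpa using ih.append_left [.terminal a]
  | nonterminal hr _ _ ihβ ihγ =>
    have hp : g.Produces [.nonterminal _] _ := ⟨_, hr, .input_output⟩
    simpa using ((hp.single.trans ihβ).append_right _).trans (ihγ.append_left _)

end Yields

theorem yields_iff_derives {β : List (Symbol T g.NT)} {w : List T} :
    g.Yields β w ↔ g.Derives β (w.map .terminal) := by
  refine ⟨Yields.derives, fun h => ?_⟩
  induction h using Relation.ReflTransGen.head_induction_on with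
  | refl => exact .map_terminal w
  | head hp _ ih => exact ih.of_produces hp

theorem Yields.exists_first_nonempty {γ : List (Symbol T g.NT)} {w : List T}
    (h : g.Yields γ w) (hw : w ≠ []) :
    ∃ δ s γ₂ v₁ v₂, γ = δ ++ s :: γ₂ ∧ g.Yields δ [] ∧ g.Yields [s] v₁ ∧ v₁ ≠ [] ∧
      g.Yields γ₂ v₂ ∧ w = v₁ ++ v₂ := by
  induction γ generalizing w with
  | nil => cases h; exact absurd rfl hw
  | cons s γ ih =>
    obtain ⟨v₁, v₂, rfl, h₁, h₂⟩ := Yields.of_append (α := [s]) h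
    obtain rfl | hv₁ := eq_or_ne v₁ []
    · obtain ⟨δ, s', γ₂, v₁', v₂', rfl, hδ, hs, hv, hγ₂, rfl⟩ := ih h₂ hw
      exact ⟨s :: δ, s', γ₂, v₁', v₂', rfl, h₁.append hδ, hs, hv, hγ₂, rfl⟩
    · exact ⟨[], s, γ, v₁, v₂, rfl, .nil, h₁, hv₁, h₂, rfl⟩

/-- `A ⇒* α Z w` along a chain of rules, where every symbol left of the chain derives `ε`. -/
inductive LeftSpine (g : ContextFreeGrammar T) : g.NT → g.NT → List T → Prop
  | refl (A : g.NT) : LeftSpine g A A []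
  | head {A B Z : g.NT} {α γ : List (Symbol T g.NT)} {u w : List T} :
      ⟨A, α ++ .nonterminal B :: γ⟩ ∈ g.rules → g.Yields α [] → g.Yields γ u →
      LeftSpine g B Z w → LeftSpine g A Z (w ++ u)

namespace LeftSpine

variable {A X Z : g.NT} {u v w : List T}

theorem trans (h₁ : g.LeftSpine A X v) (h₂ : g.LeftSpine X Z w) : g.LeftSpine A Z (w ++ v) := by
  induction h₁ with
  | refl => simpa using h₂
  | head hr hα hγ _ ih => simpa using head hr hα hγ (ih h₂)

theorem yields (h : g.LeftSpine A X w) (hX : g.Yields [.nonterminal X] v) :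
    g.Yields [.nonterminal A] (v ++ w) := by
  induction h generalizing v with
  | refl => simpa using hX
  | head hr hα hγ _ ih =>
    refine Yields.singleton_nonterminal_iff.mpr ⟨_, hr, ?_⟩
    simpa using hα.append ((ih hX).append hγ)

theorem exists_last_nonempty (h : g.LeftSpine A Z w) (hw : w ≠ []) :
    ∃ X' α X γ v w', g.LeftSpine A X' w' ∧ ⟨X', α ++ .nonterminal X :: γ⟩ ∈ g.rules ∧
      g.Yields α [] ∧ g.Yields γ v ∧ v ≠ [] ∧ g.LeftSpine X Z [] ∧ w = v ++ w' := by
  induction h with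
  | refl => exact absurd rfl hw
  | @head A B Z α γ u w hr hα hγ hB ih =>
    obtain rfl | hw₀ := eq_or_ne w []
    · exact ⟨A, α, B, γ, u, [], .refl A, hr, hα, hγ, by simpa using hw, hB, by simp⟩
    · obtain ⟨X', α', X, γ', v, w', hX', hr', hα', hγ', hv, hXZ, rfl⟩ := ih hw₀
      exact ⟨X', α', X, γ', v, w' ++ u, head hr hα hγ hX', hr', hα', hγ', hv, hXZ, by simp⟩

end LeftSpine

def spineLang (g : ContextFreeGrammar T) (A Z : g.NT) : Language T := {w | g.LeftSpine A Z w}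

@[simp]
theorem mem_spineLang {A Z : g.NT} {w : List T} : w ∈ g.spineLang A Z ↔ g.LeftSpine A Z w :=
  Iff.rfl

/-- `w` is derived from `A` through a left spine down to a rule `X → α a γ` with `α` nullable. -/
def LeftCorner (g : ContextFreeGrammar T) (A : g.NT) (w : List T) : Prop :=
  ∃ X α a γ u w', g.LeftSpine A X w' ∧ ⟨X, α ++ .terminal a :: γ⟩ ∈ g.rules ∧
    g.Yields α [] ∧ g.Yields γ u ∧ w = a :: (u ++ w')

namespace LeftCorner

variable {A B : g.NT} {α γ : List (Symbol T g.NT)} {u v w : List T}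

theorem head (hr : ⟨A, α ++ .nonterminal B :: γ⟩ ∈ g.rules) (hα : g.Yields α [])
    (hγ : g.Yields γ u) (h : g.LeftCorner B v) : g.LeftCorner A (v ++ u) := by
  obtain ⟨X, α', a, γ', u', w', hX, hr', hα', hγ', rfl⟩ := h
  exact ⟨X, α', a, γ', u', w' ++ u, .head hr hα hγ hX, hr', hα', hγ', by simp⟩

theorem yields (h : g.LeftCorner A w) : g.Yields [.nonterminal A] w := by
  obtain ⟨X, α, a, γ, u, w', hX, hr, hα, hγ, rfl⟩ := h
  have hXw : g.Yields [.nonterminal X] (a :: u) :=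
    Yields.singleton_nonterminal_iff.mpr ⟨_, hr, by simpa using hα.append (Yields.terminal a hγ)⟩
  simpa using hX.yields hXw

end LeftCorner

-- Stated for `β` inside a rule `A → α β γ` so that the induction on the parse of `β` can move
-- nullable prefixes into `α` and descend into the first nonterminal producing a letter.
theorem Yields.leftCorner_of_mem_rule {A : g.NT} {α β γ : List (Symbol T g.NT)} {w u : List T}
    (h : g.Yields β w) (hw : w ≠ []) (hr : ⟨A, α ++ β ++ γ⟩ ∈ g.rules) (hα : g.Yields α [])
    (hγ : g.Yields γ u) : g.LeftCorner A (w ++ u) := by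
  induction h generalizing A α γ u with
  | nil => exact absurd rfl hw
  | @terminal a β w hβ _ =>
    exact ⟨A, α, a, β ++ γ, w ++ u, [], .refl A, by simpa using hr, hα, hβ.append hγ, by simp⟩
  | @nonterminal B β' γ' v w hB hβ' hγ' ihβ' ihγ' =>
    obtain rfl | hv := eq_or_ne v []
    · exact ihγ' (by simpa using hw) (α := α ++ [.nonterminal B]) (by simpa using hr)
        (by simpa using hα.append (Yields.singleton_nonterminal_iff.mpr ⟨_, hB, hβ'⟩)) hγ
    · simpa using (ihβ' hv (α := []) (γ := []) (by simpa using hB) .nil .nil).head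
        (by simpa using hr) hα (hγ'.append hγ)

theorem Yields.leftCorner {A : g.NT} {w : List T} (h : g.Yields [.nonterminal A] w)
    (hw : w ≠ []) : g.LeftCorner A w := by
  obtain ⟨β, hr, hβ⟩ := Yields.singleton_nonterminal_iff.mp h
  simpa using hβ.leftCorner_of_mem_rule hw (α := []) (γ := []) (by simpa using hr) .nil .nil

def langOf (g : ContextFreeGrammar T) (β : List (Symbol T g.NT)) : Language T :=
  {w | g.Yields β w}

section langOf

variable {α β : List (Symbol T g.NT)} {w : List T}

@[simp]
theorem mem_langOf : w ∈ g.langOf β ↔ g.Yields β w := Iff.rfl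

theorem langOf_nil : g.langOf [] = 1 := by
  ext w
  exact ⟨fun h => by cases h; rfl, fun h => (Language.mem_one w).mp h ▸ .nil⟩

theorem langOf_singleton_terminal (a : T) : g.langOf [.terminal a] = {[a]} :=
  Set.ext fun _ => Yields.singleton_terminal_iff

theorem langOf_append : g.langOf (α ++ β) = g.langOf α * g.langOf β := by
  ext w
  constructor
  · intro h
    obtain ⟨w₁, w₂, rfl, h₁, h₂⟩ := Yields.of_append h
    exact Language.append_mem_mul h₁ h₂
  · rintro ⟨w₁, h₁, w₂, h₂, rfl⟩
    exact Yields.append h₁ h₂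

end langOf

section Occurring

variable (g)

def terminals : Set T := {a | ∃ r ∈ g.rules, .terminal a ∈ r.output}

def nonterminals : Set g.NT := {A | ∃ r ∈ g.rules, r.input = A ∨ .nonterminal A ∈ r.output}

def maxRuleLength : ℕ := g.rules.sup fun r => r.output.length

theorem finite_terminals : g.terminals.Finite := by
  refine (g.rules.finite_toSet.biUnion fun r _ =>
    (r.output.finite_toSet.preimage fun _ _ _ _ h => Symbol.terminal.inj h)).subset ?_
  rintro a ⟨r, hr, ha⟩
  exact Set.mem_biUnion hr ha

theorem finite_nonterminals : g.nonterminals.Finite := by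
  refine (g.rules.finite_toSet.biUnion fun r _ => ((r.output.finite_toSet.preimage
    fun _ _ _ _ h => Symbol.nonterminal.inj h).insert r.input)).subset ?_
  rintro A ⟨r, hr, rfl | hA⟩
  · exact Set.mem_biUnion hr (Set.mem_insert _ _)
  · exact Set.mem_biUnion hr (Set.mem_insert_of_mem _ hA)

end Occurring

theorem length_le_maxRuleLength {A : g.NT} {α γ : List (Symbol T g.NT)} {s : Symbol T g.NT}
    (hr : ⟨A, α ++ s :: γ⟩ ∈ g.rules) : γ.length ≤ g.maxRuleLength := by
  have := Finset.le_sup (f := fun r => r.output.length) hr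
  simp only [List.length_append, List.length_cons] at this
  exact le_trans (by omega) this

theorem Yields.mem_terminals {β : List (Symbol T g.NT)} {w : List T} (h : g.Yields β w) {a : T}
    (ha : a ∈ w) : .terminal a ∈ β ∨ a ∈ g.terminals := by
  induction h with
  | nil => cases ha
  | terminal b _ ih =>
    obtain rfl | ha := List.mem_cons.mp ha
    · exact .inl List.mem_cons_self
    · exact (ih ha).imp_left (List.mem_cons_of_mem _)
  | nonterminal hr _ _ ihβ ihγ =>
    obtain ha | ha := List.mem_append.mp ha
    · exact .inr ((ihβ ha).elim (fun h => ⟨_, hr, h⟩) id)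
    · exact (ihγ ha).imp_left (List.mem_cons_of_mem _)

theorem LeftSpine.mem_terminals {A Z : g.NT} {w : List T} (h : g.LeftSpine A Z w) {a : T}
    (ha : a ∈ w) : a ∈ g.terminals := by
  induction h with
  | refl => cases ha
  | head hr _ hγ _ ih =>
    obtain ha | ha := List.mem_append.mp ha
    · exact ih ha
    · exact (hγ.mem_terminals ha).elim (fun h => ⟨_, hr, by simp [h]⟩) id

theorem LeftSpine.eq_or_mem {A Z : g.NT} {w : List T} (h : g.LeftSpine A Z w) :
    (Z = A ∧ w = []) ∨ (A ∈ g.nonterminals ∧ Z ∈ g.nonterminals) := by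
  induction h with
  | refl => exact .inl ⟨rfl, rfl⟩
  | head hr _ _ _ ih =>
    refine .inr ⟨⟨_, hr, .inl rfl⟩, ?_⟩
    obtain ⟨rfl, -⟩ | ⟨-, hZ⟩ := ih
    · exact ⟨_, hr, .inr (by simp)⟩
    · exact hZ

section OfGNFRules

variable {N : Type}

open Classical in
noncomputable def ofGNFRules (S : N) (R : Finset (N × T × List N)) : ContextFreeGrammar T where
  NT := N
  initial := S
  rules := R.image fun p => ⟨p.1, .terminal p.2.1 :: p.2.2.map .nonterminal⟩

variable {S : N} {R : Finset (N × T × List N)}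

theorem mem_ofGNFRules_rules {r : ContextFreeRule T N} :
    r ∈ (ofGNFRules S R).rules ↔
      ∃ n a ns, (n, a, ns) ∈ R ∧ r = ⟨n, .terminal a :: ns.map .nonterminal⟩ := by
  classical
  unfold ofGNFRules
  rw [Finset.mem_image]
  constructor
  · rintro ⟨⟨n, a, ns⟩, hR, rfl⟩
    exact ⟨n, a, ns, hR, rfl⟩
  · rintro ⟨n, a, ns, hR, rfl⟩
    exact ⟨(n, a, ns), hR, rfl⟩

theorem exists_output_eq_of_mem_ofGNFRules_rules {r : ContextFreeRule T N}
    (hr : r ∈ (ofGNFRules S R).rules) :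
    ∃ (a : T) (ns : List N), r.output = .terminal a :: ns.map .nonterminal := by
  obtain ⟨n, a, ns, -, rfl⟩ := mem_ofGNFRules_rules.mp hr
  exact ⟨a, ns, rfl⟩

def symbolLang (L : N → Language T) : Symbol T N → Language T
  | .terminal a => {[a]}
  | .nonterminal n => L n

variable {L : N → Language T}

theorem yields_ofGNFRules_of_mem_prod {ns : List N} {u : List T} (hu : u ∈ (ns.map L).prod)
    (ih : ∀ n v, v ∈ L n → v.length ≤ u.length → (ofGNFRules S R).Yields [.nonterminal n] v) :
    (ofGNFRules S R).Yields (ns.map .nonterminal) u := by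
  induction ns generalizing u with
  | nil => exact (Language.mem_one u).mp hu ▸ .nil
  | cons n ns ihns =>
    obtain ⟨v, hv, v', hv', rfl⟩ := hu
    exact (ih n v hv (by simp)).append
      (ihns hv' fun m x hx hlen => ih m x hx (by rw [List.length_append]; omega))

variable
  (hL : ∀ n w, w ∈ L n ↔ ∃ a ns u, (n, a, ns) ∈ R ∧ u ∈ (ns.map L).prod ∧ w = a :: u)
include hL

theorem Yields.mem_prod_map_symbolLang {β : List (Symbol T (ofGNFRules S R).NT)} {w : List T}
    (h : (ofGNFRules S R).Yields β w) : w ∈ (β.map (symbolLang L)).prod := by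
  induction h with
  | nil => exact (Language.mem_one _).mpr rfl
  | terminal a _ ih => exact Language.append_mem_mul (a := [a]) rfl ih
  | nonterminal hr _ _ ihβ ihγ =>
    obtain ⟨n, a, ns, hR, hr⟩ := mem_ofGNFRules_rules.mp hr
    cases hr
    obtain ⟨_, rfl, u, hu, rfl⟩ := ihβ
    refine Language.append_mem_mul ((hL _ _).mpr ⟨a, ns, u, hR, ?_, rfl⟩) ihγ
    rw [List.map_map] at hu
    exact hu

theorem yields_ofGNFRules_iff {n : N} {w : List T} :
    (ofGNFRules S R).Yields [.nonterminal n] w ↔ w ∈ L n := by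
  refine ⟨fun h => ?_, fun hw => ?_⟩
  · have : w ∈ (([.nonterminal n] : List (Symbol T N)).map (symbolLang L)).prod :=
      h.mem_prod_map_symbolLang hL
    rwa [List.map_singleton, List.prod_singleton] at this
  induction hlen : w.length using Nat.strong_induction_on generalizing n w with
  | _ k ih =>
    obtain ⟨a, ns, u, hR, hu, rfl⟩ := (hL n w).mp hw
    refine Yields.singleton_nonterminal_iff.mpr
      ⟨_, mem_ofGNFRules_rules.mpr ⟨n, a, ns, hR, rfl⟩, ?_⟩
    refine .terminal a (yields_ofGNFRules_of_mem_prod hu fun m v hv hv' => ih v.length ?_ hv rfl)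
    rw [List.length_cons] at hlen
    omega

end OfGNFRules

end General

section Greibach

open Language

variable {T : Type} (g : ContextFreeGrammar T)

inductive GreibachNT : Type
  | ofNT (A : g.NT)
  | spine (A Z : g.NT)
  | letter (a : g.terminals)

def greibachLang : g.GreibachNT → Language T
  | .ofNT A => g.langOf [.nonterminal A] - 1
  | .spine A Z => g.spineLang A Z - 1
  | .letter a => {[a.1]}

variable {g}

open GreibachNT

theorem prodCovered_langOf {γ : List (Symbol T g.NT)}
    (hγ : ∀ a, .terminal a ∈ γ → a ∈ g.terminals) :
    ProdCovered g.greibachLang γ.length (g.langOf γ) := by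
  induction γ with
  | nil => simpa [langOf_nil] using prodCovered_one
  | cons s γ ih =>
    have hs : ProdCovered g.greibachLang 1 (g.langOf [s]) := by
      cases s with
      | terminal a =>
        rw [langOf_singleton_terminal]
        exact fun w hw => ⟨[letter ⟨a, hγ a (by simp)⟩], le_rfl, by simpa [greibachLang] using hw,
          by simp [greibachLang]⟩
      | nonterminal B => exact prodCovered_of_eq_sub_one (n := ofNT B) rfl
    rw [← List.singleton_append, langOf_append]
    exact (hs.mul (ih fun a ha => hγ a (by simp [ha]))).mono (by simp [add_comm])

theorem prodCovered_spineLang (A X : g.NT) :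
    ProdCovered g.greibachLang 1 (g.spineLang A X) :=
  prodCovered_of_eq_sub_one (n := spine A X) rfl

theorem gnfCovered_greibachLang_ofNT (A : g.NT) :
    GNFCovered g.greibachLang (g.maxRuleLength + 1) (g.greibachLang (ofNT A)) := by
  refine GNFCovered.of_local fun w hw => ?_
  obtain ⟨hw, hw₀⟩ := mem_sub_one.mp hw
  obtain ⟨X, α, a, γ, u, w', hX, hr, hα, hγ, rfl⟩ := Yields.leftCorner hw hw₀
  refine ⟨{[a]} * g.langOf γ * g.spineLang A X, ?_,
    ⟨_, ⟨[a], rfl, u, hγ, rfl⟩, w', hX, by simp⟩, ?_⟩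
  · rintro _ ⟨_, ⟨_, rfl, u', hu', rfl⟩, w'', hw'', rfl⟩
    exact mem_sub_one.mpr
      ⟨LeftCorner.yields ⟨X, α, a, γ, u', w'', hw'', hr, hα, hu', by simp⟩, by simp⟩
  · have hlen := length_le_maxRuleLength hr
    exact (((gnfCovered_singleton a).mul (prodCovered_langOf fun b hb => ⟨_, hr, by simp [hb]⟩)).mul
      (prodCovered_spineLang A X)).mono (by omega)

theorem gnfCovered_langOf_sub_one {γ : List (Symbol T g.NT)}
    (hγ : ∀ a, .terminal a ∈ γ → a ∈ g.terminals) :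
    GNFCovered g.greibachLang (g.maxRuleLength + 1 + γ.length) (g.langOf γ - 1) := by
  refine GNFCovered.of_local fun w hw => ?_
  obtain ⟨hw, hw₀⟩ := mem_sub_one.mp hw
  obtain ⟨δ, s, γ₂, v₁, v₂, rfl, hδ, hs, hv₁, hγ₂, rfl⟩ := Yields.exists_first_nonempty hw hw₀
  refine ⟨(g.langOf [s] - 1) * g.langOf γ₂, ?_,
    ⟨v₁, mem_sub_one.mpr ⟨hs, hv₁⟩, v₂, hγ₂, rfl⟩, ?_⟩
  · rintro _ ⟨v, hv, v', hv', rfl⟩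
    obtain ⟨hv, hv₀⟩ := mem_sub_one.mp hv
    exact mem_sub_one.mpr ⟨by simpa using hδ.append (Yields.append hv hv'), by simp [hv₀]⟩
  · have hs : GNFCovered g.greibachLang (g.maxRuleLength + 1) (g.langOf [s] - 1) := by
      cases s with
      | terminal b =>
        have : g.langOf [.terminal b] - 1 = {[b]} := by
          ext w
          rw [mem_sub_one, langOf_singleton_terminal]
          exact ⟨And.left, fun h => ⟨h, by simp [show w = [b] from h]⟩⟩
        exact this ▸ (gnfCovered_singleton b).mono (Nat.zero_le _)
      | nonterminal B => exact gnfCovered_greibachLang_ofNT B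
    exact (hs.mul (prodCovered_langOf fun a ha => hγ a (by simp [ha]))).mono (by simp only [List.length_append, List.length_cons]; omega)

theorem gnfCovered_greibachLang_spine (A Z : g.NT) :
    GNFCovered g.greibachLang (2 * g.maxRuleLength + 2) (g.greibachLang (spine A Z)) := by
  refine GNFCovered.of_local fun w hw => ?_
  obtain ⟨hw, hw₀⟩ := mem_sub_one.mp hw
  obtain ⟨X', α, X, γ, v, w', hX', hr, hα, hγ, hv, hXZ, rfl⟩ :=
    LeftSpine.exists_last_nonempty hw hw₀
  refine ⟨(g.langOf γ - 1) * g.spineLang A X', ?_,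
    ⟨v, mem_sub_one.mpr ⟨hγ, hv⟩, w', hX', rfl⟩, ?_⟩
  · rintro _ ⟨u, hu, u', hu', rfl⟩
    obtain ⟨hu, hu₀⟩ := mem_sub_one.mp hu
    exact mem_sub_one.mpr ⟨by simpa using LeftSpine.trans hu' (.head hr hα hu hXZ), by simp [hu₀]⟩
  · have hlen := length_le_maxRuleLength hr
    exact ((gnfCovered_langOf_sub_one fun b hb => ⟨_, hr, by simp [hb]⟩).mul
      (prodCovered_spineLang A X')).mono (by omega)

theorem mem_terminals_of_mem_greibachLang {n : g.GreibachNT} {w : List T}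
    (hw : w ∈ g.greibachLang n) {a : T} (ha : a ∈ w) : a ∈ g.terminals := by
  cases n with
  | ofNT A => exact ((mem_sub_one.mp hw).1.mem_terminals ha).resolve_left (by simp)
  | spine A Z => exact (mem_sub_one.mp hw).1.mem_terminals ha
  | letter b =>
    obtain rfl : w = [b.1] := hw
    exact (List.mem_singleton.mp ha) ▸ b.2

theorem finite_setOf_greibachLang_nonempty :
    {n : g.GreibachNT | (g.greibachLang n).Nonempty}.Finite := by
  have := g.finite_terminals.to_subtype
  refine (((g.finite_nonterminals.image ofNT).union (g.finite_nonterminals.image2 spine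
    g.finite_nonterminals)).union (Set.finite_range letter)).subset ?_
  rintro (A | ⟨A, Z⟩ | a) ⟨w, hw⟩
  · obtain ⟨β, hr, -⟩ := Yields.singleton_nonterminal_iff.mp (mem_sub_one.mp hw).1
    exact .inl (.inl ⟨A, ⟨_, hr, .inl rfl⟩, rfl⟩)
  · obtain ⟨hw, hw₀⟩ := mem_sub_one.mp hw
    obtain ⟨-, rfl⟩ | ⟨hA, hZ⟩ := LeftSpine.eq_or_mem hw
    · exact absurd rfl hw₀
    · exact .inl (.inr ⟨A, hA, Z, hZ, rfl⟩)
  · exact .inr ⟨a, rfl⟩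

variable (g) in
def greibachRules : Set (g.GreibachNT × T × List g.GreibachNT) :=
  {(n, a, ns) : g.GreibachNT × T × List g.GreibachNT |
    ns.length ≤ 2 * g.maxRuleLength + 2 ∧ (∀ m ∈ ns, (g.greibachLang m).Nonempty) ∧
      ∀ v ∈ (ns.map g.greibachLang).prod, a :: v ∈ g.greibachLang n}

theorem finite_greibachRules : g.greibachRules.Finite := by
  have hU := g.finite_setOf_greibachLang_nonempty
  refine (hU.prod (g.finite_terminals.prod
    (hU.setOf_length_le_forall_mem (2 * g.maxRuleLength + 2)))).subset ?_
  rintro ⟨n, a, ns⟩ ⟨hl, hns, hsound⟩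
  obtain ⟨u, hu⟩ := prod_nonempty hns
  have hw := hsound u hu
  exact ⟨⟨_, hw⟩, mem_terminals_of_mem_greibachLang hw List.mem_cons_self, hl, hns⟩

theorem gnfCovered_greibachLang (n : g.GreibachNT) :
    GNFCovered g.greibachLang (2 * g.maxRuleLength + 2) (g.greibachLang n) := by
  cases n with
  | ofNT A => exact (gnfCovered_greibachLang_ofNT A).mono (by omega)
  | spine A Z => exact gnfCovered_greibachLang_spine A Z
  | letter a => exact (gnfCovered_singleton a.1).mono (Nat.zero_le _)

theorem mem_greibachLang_iff {n : g.GreibachNT} {w : List T} :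
    w ∈ g.greibachLang n ↔ ∃ a ns u, (n, a, ns) ∈ g.greibachRules ∧
      u ∈ (ns.map g.greibachLang).prod ∧ w = a :: u := by
  constructor
  · intro hw
    obtain ⟨a, ns, u, hl, hu, rfl, hsound⟩ := gnfCovered_greibachLang n w hw
    exact ⟨a, ns, u, ⟨hl, fun m hm => nonempty_of_mem_prod hu hm, hsound⟩, hu, rfl⟩
  · rintro ⟨a, ns, u, ⟨-, -, hsound⟩, hu, rfl⟩
    exact hsound u hu

variable (g) in
noncomputable def toGreibach : ContextFreeGrammar T :=
  ofGNFRules (.ofNT g.initial) g.finite_greibachRules.toFinset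

variable (g) in
theorem language_toGreibach : g.toGreibach.language = g.language \ {[]} := by
  ext w
  have h : g.toGreibach.Yields [.nonterminal (GreibachNT.ofNT g.initial)] w ↔
      w ∈ g.greibachLang (.ofNT g.initial) :=
    yields_ofGNFRules_iff fun n w => by simpa using mem_greibachLang_iff
  rw [mem_language_iff, ← yields_iff_derives]
  exact h.trans (Language.mem_sub_one.trans
    (and_congr (yields_iff_derives.trans (mem_language_iff g w).symm) Iff.rfl))

end Greibach

end ContextFreeGrammar

/-- **Greibach normal form.**
For every context-free grammar `G` there exists a context-free grammar `G'` in Greibach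
normal form — the right-hand side of every production of `G'` is a terminal character
followed by a (possibly empty) string of nonterminals — such that `L(G') = L(G) \ {ε}`. -/
theorem greibach_normal_form {T : Type} (G : ContextFreeGrammar.{0} T) :
    ∃ G' : ContextFreeGrammar.{0} T,
      (∀ r ∈ G'.rules, ∃ (a : T) (l : List G'.NT),
          r.output = Symbol.terminal a :: l.map Symbol.nonterminal) ∧
      G'.language = G.language \ {([] : List T)} :=
  ⟨G.toGreibach, fun _ hr => ContextFreeGrammar.exists_output_eq_of_mem_ofGNFRules_rules hr,
    G.language_toGreibach⟩
end

section
/- McNaughton's closure theorem for parenthesis languages (union and intersection): if L₁ and L₂ are languages generated by parenthesis grammars over the same terminal alphabet Σ ∪ {[, ]}, then L₁ ∪ L₂ and L₁ ∩ L₂ are also generated by parenthesis grammars over Σ ∪ {[, ]}. -/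
/-!
Union: a fresh start symbol takes over the start rules of every grammar, so each rule stays
bracketed, and a derivation from a copied nonterminal never leaves its own grammar.

Intersection: the product grammar has the nonterminals `(A, B)` and the rules whose two
projections are rules of `G₁` and `G₂`; projecting derivations shows `L(G₁ × G₂) ⊆ L₁ ∩ L₂`.
Conversely, in a parenthesis grammar a word derived from a nonterminal has the form
`[u₁ ⋯ uₙ]`, each `uᵢ` a letter or again a derived word. These pieces are *blocks*: nonempty
words of bracket depth `0` all of whose proper nonempty prefixes have positive depth. Since a
block is never a proper prefix of another block, a concatenation of blocks splits into blocks
in only one way. So derivations of one word from `A` in `G₁` and from `B` in `G₂` begin with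
rules `A → [s₁ ⋯ sₙ]`, `B → [t₁ ⋯ tₙ]` deriving the same pieces, with `sᵢ` a letter exactly
when `tᵢ` is, and induction on the length of the word yields a derivation from `(A, B)`.
-/

/-- A context-free grammar over the terminal alphabet `α ⊕ Bool` — where `Sum.inl a` is an
ordinary terminal of `Σ = α`, `Sum.inr false` is the open parenthesis `[` and
`Sum.inr true` is the closed parenthesis `]` — is a *parenthesis grammar* iff every
production has the form `A → [ mid ]` where `mid` contains only nonterminals and ordinary
terminals (no parentheses). -/
def IsParenthesisGrammar {α : Type} (G : ContextFreeGrammar.{0} (α ⊕ Bool)) : Prop :=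
  ∀ r ∈ G.rules, ∃ mid : List (Symbol (α ⊕ Bool) G.NT),
    r.output = Symbol.terminal (Sum.inr false) :: mid ++ [Symbol.terminal (Sum.inr true)] ∧
    ∀ s ∈ mid, (∃ A : G.NT, s = Symbol.nonterminal A) ∨ ∃ a : α, s = Symbol.terminal (Sum.inl a)

open Function List

theorem List.prefix_append_iff {α : Type*} {p u v : List α} :
    p <+: u ++ v ↔ p <+: u ∨ ∃ q, q <+: v ∧ p = u ++ q := by
  constructor
  · intro h
    refine (prefix_or_prefix_of_prefix h (prefix_append u v)).imp id fun hup => ?_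
    obtain ⟨q, rfl⟩ := hup
    exact ⟨q, (prefix_append_right_inj u).mp h, rfl⟩
  · rintro (h | ⟨q, hq, rfl⟩)
    · exact h.trans (prefix_append u v)
    · exact (prefix_append_right_inj u).mpr hq

theorem List.Forall₂.exists_of_mem_right {α β : Type*} {R : α → β → Prop} {l₁ : List α}
    {l₂ : List β} (h : Forall₂ R l₁ l₂) {b : β} (hb : b ∈ l₂) : ∃ a ∈ l₁, R a b := by
  induction h with
  | nil => simp at hb
  | @cons a b' _ _ hab _ ih =>
    rcases mem_cons.mp hb with rfl | hb
    · exact ⟨a, mem_cons_self, hab⟩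
    · obtain ⟨a', ha', h⟩ := ih hb
      exact ⟨a', mem_cons_of_mem _ ha', h⟩

namespace Symbol

variable {T N N' : Type*}

def map (f : N → N') : Symbol T N → Symbol T N'
  | terminal t => terminal t
  | nonterminal n => nonterminal (f n)

@[simp] theorem map_terminal (f : N → N') (t : T) : (terminal t : Symbol T N).map f = terminal t :=
  rfl

@[simp] theorem map_nonterminal (f : N → N') (n : N) :
    (nonterminal n : Symbol T N).map f = nonterminal (f n) :=
  rfl

@[simp] theorem map_comp_terminal (f : N → N') :
    map f ∘ terminal = (terminal : T → Symbol T N') :=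
  rfl

@[simp] theorem map_eq_terminal_iff {f : N → N'} {s : Symbol T N} {t : T} :
    s.map f = terminal t ↔ s = terminal t := by
  cases s <;> simp

theorem map_list_eq_map_terminal_iff {f : N → N'} {v : List (Symbol T N)} {w : List T} :
    v.map (map f) = w.map terminal ↔ v = w.map terminal := by
  induction v generalizing w with
  | nil => cases w <;> simp
  | cons s v ih => cases w <;> simp [ih]

theorem map_prod_injective {N₁ N₂ : Type*} :
    Injective fun s : Symbol T (N₁ × N₂) => (s.map Prod.fst, s.map Prod.snd) := by
  rintro (t | ⟨a, b⟩) (t' | ⟨a', b'⟩) h <;> simp_all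

end Symbol

namespace ContextFreeRule

variable {T N N' : Type*} {r : ContextFreeRule T N}

def map (f : N → N') (r : ContextFreeRule T N) : ContextFreeRule T N' :=
  ⟨f r.input, r.output.map (Symbol.map f)⟩

theorem map_prod_injective {N₁ N₂ : Type*} :
    Injective fun r : ContextFreeRule T (N₁ × N₂) => (r.map Prod.fst, r.map Prod.snd) := by
  rintro ⟨⟨a, b⟩, o⟩ ⟨⟨a', b'⟩, o'⟩ h
  simp only [map, Prod.mk.injEq, mk.injEq] at h
  obtain ⟨⟨rfl, h₁⟩, rfl, h₂⟩ := h
  have : o.map (fun s => (s.map Prod.fst, s.map Prod.snd)) =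
      o'.map (fun s => (s.map Prod.fst, s.map Prod.snd)) := by
    rw [← zip_map', ← zip_map', h₁, h₂]
  rw [(map_injective_iff.mpr Symbol.map_prod_injective) this]

theorem Rewrites.append_split {u v w : List (Symbol T N)} (h : r.Rewrites (u ++ v) w) :
    (∃ u', r.Rewrites u u' ∧ w = u' ++ v) ∨ ∃ v', r.Rewrites v v' ∧ w = u ++ v' := by
  induction u generalizing w with
  | nil => exact Or.inr ⟨w, h, rfl⟩
  | cons x u ih =>
    cases h with
    | head s => exact Or.inl ⟨r.output ++ u, .head u, by simp⟩
    | cons _ h =>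
      rcases ih h with ⟨u', hu, rfl⟩ | ⟨v', hv, rfl⟩
      · exact Or.inl ⟨x :: u', hu.cons x, rfl⟩
      · exact Or.inr ⟨v', hv, rfl⟩

theorem Rewrites.eq_output_of_singleton {A : N} {v : List (Symbol T N)}
    (h : r.Rewrites [.nonterminal A] v) : r.input = A ∧ v = r.output := by
  cases h with
  | head s => simp
  | cons _ h => exact absurd h.nonterminal_input_mem not_mem_nil

theorem Rewrites.map (f : N → N') {u v : List (Symbol T N)} (h : r.Rewrites u v) :
    (r.map f).Rewrites (u.map (Symbol.map f)) (v.map (Symbol.map f)) := by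
  induction h with
  | head s => simpa [ContextFreeRule.map] using Rewrites.head (r := r.map f) (s.map (Symbol.map f))
  | cons x _ ih => exact ih.cons _

theorem Rewrites.exists_of_map {f : N → N'} (hf : Injective f) {u : List (Symbol T N)}
    {v : List (Symbol T N')} (h : (r.map f).Rewrites (u.map (Symbol.map f)) v) :
    ∃ v₀, v = v₀.map (Symbol.map f) ∧ r.Rewrites u v₀ := by
  generalize hu' : u.map (Symbol.map f) = u' at h
  induction h generalizing u with
  | head s =>
    obtain ⟨x, u, rfl, hx, rfl⟩ := map_eq_cons_iff.mp hu'
    obtain rfl : x = .nonterminal r.input := by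
      cases x <;> simp_all [Symbol.map, ContextFreeRule.map, hf.eq_iff]
    exact ⟨r.output ++ u, by simp [ContextFreeRule.map], .head u⟩
  | cons y _ ih =>
    obtain ⟨x, u, rfl, rfl, hu⟩ := map_eq_cons_iff.mp hu'
    obtain ⟨v₀, rfl, h⟩ := ih hu
    exact ⟨x :: v₀, rfl, h.cons x⟩

end ContextFreeRule

namespace ContextFreeGrammar

variable {T : Type*} {g : ContextFreeGrammar T}

theorem Produces.append_split {u v w : List (Symbol T g.NT)} (h : g.Produces (u ++ v) w) :
    (∃ u', g.Produces u u' ∧ w = u' ++ v) ∨ ∃ v', g.Produces v v' ∧ w = u ++ v' := by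
  obtain ⟨r, hr, h⟩ := h
  exact h.append_split.imp (fun ⟨u', h, e⟩ => ⟨u', ⟨r, hr, h⟩, e⟩)
    fun ⟨v', h, e⟩ => ⟨v', ⟨r, hr, h⟩, e⟩

theorem Derives.append_split {u v w : List (Symbol T g.NT)} (h : g.Derives (u ++ v) w) :
    ∃ w₁ w₂, w = w₁ ++ w₂ ∧ g.Derives u w₁ ∧ g.Derives v w₂ := by
  induction h with
  | refl => exact ⟨u, v, rfl, .refl u, .refl v⟩
  | tail _ hp ih =>
    obtain ⟨w₁, w₂, rfl, h₁, h₂⟩ := ih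
    rcases hp.append_split with ⟨w₁', hp₁, rfl⟩ | ⟨w₂', hp₂, rfl⟩
    · exact ⟨w₁', w₂, rfl, h₁.trans_produces hp₁, h₂⟩
    · exact ⟨w₁, w₂', rfl, h₁, h₂.trans_produces hp₂⟩

theorem derives_terminals_iff {v w : List T} :
    g.Derives (v.map .terminal) (w.map .terminal) ↔ w = v := by
  refine ⟨fun h => ?_, by rintro rfl; rfl⟩
  rcases h.eq_or_head with h | ⟨_, hp, -⟩
  · exact (map_injective_iff.mpr fun _ _ => Symbol.terminal.inj) h.symm
  · obtain ⟨r, -, hr⟩ := hp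
    simpa using hr.nonterminal_input_mem

theorem derives_append_terminals_iff {u v : List (Symbol T g.NT)} {w : List T} :
    g.Derives (u ++ v) (w.map .terminal) ↔ ∃ w₁ w₂, w = w₁ ++ w₂ ∧
      g.Derives u (w₁.map .terminal) ∧ g.Derives v (w₂.map .terminal) := by
  constructor
  · intro h
    obtain ⟨w₁', w₂', hw, h₁, h₂⟩ := h.append_split
    obtain ⟨w₁, w₂, rfl, rfl, rfl⟩ := map_eq_append_iff.mp hw
    exact ⟨w₁, w₂, rfl, h₁, h₂⟩
  · rintro ⟨w₁, w₂, rfl, h₁, h₂⟩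
    rw [map_append]
    exact (h₁.append_right v).trans (h₂.append_left _)

theorem derives_terminals_iff_forall₂ {l : List (Symbol T g.NT)} {w : List T} :
    g.Derives l (w.map .terminal) ↔ ∃ ws : List (List T), w = ws.flatten ∧
      Forall₂ (fun s u => g.Derives [s] (u.map .terminal)) l ws := by
  induction l generalizing w with
  | nil =>
    rw [← map_nil (f := Symbol.terminal), derives_terminals_iff]
    simp
  | cons s l ih =>
    rw [← singleton_append, derives_append_terminals_iff]
    constructor
    · rintro ⟨w₁, w₂, rfl, h₁, h₂⟩
      obtain ⟨ws, rfl, hf⟩ := ih.mp h₂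
      exact ⟨w₁ :: ws, rfl, .cons h₁ hf⟩
    · rintro ⟨_, rfl, hf⟩
      obtain ⟨u, ws, h₁, hws, rfl⟩ := forall₂_cons_left_iff.mp hf
      exact ⟨_, _, rfl, h₁, ih.mpr ⟨_, rfl, hws⟩⟩

theorem derives_nonterminal_terminals_iff {A : g.NT} {w : List T} :
    g.Derives [.nonterminal A] (w.map .terminal) ↔
      ∃ r ∈ g.rules, r.input = A ∧ g.Derives r.output (w.map .terminal) := by
  constructor
  · intro h
    rcases h.eq_or_head with h | ⟨_, ⟨r, hr, hrw⟩, hd⟩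
    · cases w <;> simp at h
    · obtain ⟨hA, rfl⟩ := hrw.eq_output_of_singleton
      exact ⟨r, hr, hA, hd⟩
  · rintro ⟨r, hr, rfl, hd⟩
    exact Produces.trans_derives ⟨r, hr, ContextFreeRule.Rewrites.input_output⟩ hd

section map

variable {g' : ContextFreeGrammar T} {f : g.NT → g'.NT}

theorem Derives.map (hf : ∀ r ∈ g.rules, r.map f ∈ g'.rules) {u v : List (Symbol T g.NT)}
    (h : g.Derives u v) : g'.Derives (u.map (Symbol.map f)) (v.map (Symbol.map f)) := by
  induction h with
  | refl => rfl
  | tail _ hp ih =>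
    obtain ⟨r, hr, hrw⟩ := hp
    exact ih.trans_produces ⟨r.map f, hf r hr, hrw.map f⟩

theorem Derives.map_terminals (hf : ∀ r ∈ g.rules, r.map f ∈ g'.rules)
    {u : List (Symbol T g.NT)} {w : List T} (h : g.Derives u (w.map .terminal)) :
    g'.Derives (u.map (Symbol.map f)) (w.map .terminal) := by
  simpa [map_map] using h.map hf

theorem language_le_of_map (hf : ∀ r ∈ g.rules, r.map f ∈ g'.rules)
    (hinit : f g.initial = g'.initial) : g.language ≤ g'.language := fun w hw =>
  (mem_language_iff g' w).mpr <| hinit ▸ ((mem_language_iff g w).mp hw).map_terminals hf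

theorem Produces.exists_of_map (hf : Injective f)
    (hrules : ∀ r' ∈ g'.rules, ∀ n, r'.input = f n → ∃ r ∈ g.rules, r.map f = r')
    {u : List (Symbol T g.NT)} {v : List (Symbol T g'.NT)}
    (h : g'.Produces (u.map (Symbol.map f)) v) :
    ∃ v₀, v = v₀.map (Symbol.map f) ∧ g.Produces u v₀ := by
  obtain ⟨r', hr', hrw⟩ := h
  obtain ⟨x, -, hx⟩ := mem_map.mp hrw.nonterminal_input_mem
  obtain ⟨n, rfl⟩ : ∃ n, x = .nonterminal n := by cases x <;> simp_all
  obtain ⟨r, hr, rfl⟩ := hrules r' hr' n (by simpa using hx.symm)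
  obtain ⟨v₀, rfl, hrw₀⟩ := hrw.exists_of_map hf
  exact ⟨v₀, rfl, r, hr, hrw₀⟩

theorem Derives.exists_of_map (hf : Injective f)
    (hrules : ∀ r' ∈ g'.rules, ∀ n, r'.input = f n → ∃ r ∈ g.rules, r.map f = r')
    {u : List (Symbol T g.NT)} {v : List (Symbol T g'.NT)}
    (h : g'.Derives (u.map (Symbol.map f)) v) :
    ∃ v₀, v = v₀.map (Symbol.map f) ∧ g.Derives u v₀ := by
  induction h with
  | refl => exact ⟨u, rfl, .refl u⟩
  | tail _ hp ih =>
    obtain ⟨v₀, rfl, h⟩ := ih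
    obtain ⟨w₀, rfl, hp₀⟩ := hp.exists_of_map hf hrules
    exact ⟨w₀, rfl, h.trans_produces hp₀⟩

theorem Derives.of_map_terminals (hf : Injective f)
    (hrules : ∀ r' ∈ g'.rules, ∀ n, r'.input = f n → ∃ r ∈ g.rules, r.map f = r')
    {u : List (Symbol T g.NT)} {w : List T}
    (h : g'.Derives (u.map (Symbol.map f)) (w.map .terminal)) : g.Derives u (w.map .terminal) := by
  obtain ⟨v₀, hv₀, h⟩ := h.exists_of_map hf hrules
  rwa [Symbol.map_list_eq_map_terminal_iff.mp hv₀.symm] at h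

end map

section iUnion

variable {ι : Type} (G : ι → ContextFreeGrammar T)

def iUnionIncl (i : ι) (n : (G i).NT) : Option (Σ j, (G j).NT) := some ⟨i, n⟩

theorem iUnionIncl_injective (i : ι) : Injective (iUnionIncl G i) := fun _ _ h => by
  simpa [iUnionIncl] using h

open Classical in
/-- Rather than `none → Sᵢ`, which is not a parenthesis rule, the start symbol `none` gets a
copy `none → α` of every start rule `Sᵢ → α`. -/
noncomputable def iUnion [Fintype ι] : ContextFreeGrammar T where
  NT := Option (Σ i, (G i).NT)
  initial := none
  rules := Finset.univ.biUnion fun i =>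
    (G i).rules.image (·.map (iUnionIncl G i)) ∪
      ((G i).rules.filter (·.input = (G i).initial)).image
        fun r => ⟨none, (r.map (iUnionIncl G i)).output⟩

variable {G} [Fintype ι]

open Classical in
theorem mem_iUnion_rules {r : ContextFreeRule T (Option (Σ i, (G i).NT))} :
    r ∈ (iUnion G).rules ↔ ∃ i, (∃ r₀ ∈ (G i).rules, r₀.map (iUnionIncl G i) = r) ∨
      ∃ r₀ ∈ (G i).rules, r₀.input = (G i).initial ∧
        ⟨none, (r₀.map (iUnionIncl G i)).output⟩ = r := by
  refine Finset.mem_biUnion.trans ?_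
  simp only [Finset.mem_univ, true_and, Finset.mem_union, Finset.mem_image, Finset.mem_filter,
    and_assoc]

theorem exists_map_eq_of_mem_iUnion_rules (i : ι) :
    ∀ r ∈ (iUnion G).rules, ∀ n, r.input = iUnionIncl G i n →
      ∃ r₀ ∈ (G i).rules, r₀.map (iUnionIncl G i) = r := by
  intro r hr n hn
  obtain ⟨j, ⟨r₀, hr₀, rfl⟩ | ⟨r₀, hr₀, -, rfl⟩⟩ := mem_iUnion_rules.mp hr
  · obtain ⟨rfl, h⟩ := Sigma.mk.inj_iff.mp (Option.some_injective _ hn)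
    exact ⟨r₀, hr₀, rfl⟩
  · simp [iUnionIncl] at hn

theorem language_iUnion : (iUnion G).language = ⨆ i, (G i).language := by
  ext w
  rw [Language.mem_iSup, mem_language_iff]
  simp only [mem_language_iff, derives_nonterminal_terminals_iff]
  constructor
  · rintro ⟨r, hr, hinit, hd⟩
    obtain ⟨i, ⟨r₀, hr₀, rfl⟩ | ⟨r₀, hr₀, hr₀init, rfl⟩⟩ := mem_iUnion_rules.mp hr
    · simp [ContextFreeRule.map, iUnionIncl, iUnion] at hinit
    · exact ⟨i, r₀, hr₀, hr₀init, Derives.of_map_terminals (iUnionIncl_injective G i)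
        (exists_map_eq_of_mem_iUnion_rules i) hd⟩
  · rintro ⟨i, r₀, hr₀, hinit, hd⟩
    refine ⟨⟨none, (r₀.map (iUnionIncl G i)).output⟩,
      mem_iUnion_rules.mpr ⟨i, .inr ⟨r₀, hr₀, hinit, rfl⟩⟩, rfl, ?_⟩
    exact hd.map_terminals fun r hr => mem_iUnion_rules.mpr ⟨i, .inl ⟨r, hr, rfl⟩⟩

end iUnion

section prod

variable (G₁ G₂ : ContextFreeGrammar T)

noncomputable def prod : ContextFreeGrammar T where
  NT := G₁.NT × G₂.NT
  initial := (G₁.initial, G₂.initial)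
  rules := (G₁.rules ×ˢ G₂.rules).preimage (fun r => (r.map Prod.fst, r.map Prod.snd))
    ContextFreeRule.map_prod_injective.injOn

variable {G₁ G₂}

theorem mem_prod_rules {r : ContextFreeRule T (G₁.NT × G₂.NT)} :
    r ∈ (G₁.prod G₂).rules ↔ r.map Prod.fst ∈ G₁.rules ∧ r.map Prod.snd ∈ G₂.rules := by
  exact (Finset.mem_preimage (hf := ContextFreeRule.map_prod_injective.injOn)).trans
    Finset.mem_product

theorem language_prod_le : (G₁.prod G₂).language ≤ G₁.language ⊓ G₂.language := fun _ hw =>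
  ⟨language_le_of_map (fun _ hr => (mem_prod_rules.mp hr).1) rfl hw,
    language_le_of_map (fun _ hr => (mem_prod_rules.mp hr).2) rfl hw⟩

end prod

end ContextFreeGrammar

namespace Parenthesis

open ContextFreeGrammar

section words

variable {α : Type*}

@[simp] def weight : α ⊕ Bool → ℤ
  | .inl _ => 0
  | .inr false => 1
  | .inr true => -1

def depth (w : List (α ⊕ Bool)) : ℤ := (w.map weight).sum

@[simp] theorem depth_nil : depth ([] : List (α ⊕ Bool)) = 0 := rfl

@[simp] theorem depth_cons (x : α ⊕ Bool) (w : List (α ⊕ Bool)) :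
    depth (x :: w) = weight x + depth w := by
  simp [depth]

@[simp] theorem depth_append (u v : List (α ⊕ Bool)) : depth (u ++ v) = depth u + depth v := by
  simp [depth]

def Balanced (w : List (α ⊕ Bool)) : Prop := depth w = 0 ∧ ∀ p, p <+: w → 0 ≤ depth p

def IsBlock (w : List (α ⊕ Bool)) : Prop :=
  w ≠ [] ∧ depth w = 0 ∧ ∀ p, p <+: w → p ≠ [] → p ≠ w → 0 < depth p

variable {u v w : List (α ⊕ Bool)}

theorem balanced_nil : Balanced ([] : List (α ⊕ Bool)) :=
  ⟨rfl, fun p hp => by rw [prefix_nil.mp hp, depth_nil]⟩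

theorem Balanced.append (hu : Balanced u) (hv : Balanced v) : Balanced (u ++ v) := by
  refine ⟨by simp [hu.1, hv.1], fun p hp => ?_⟩
  rcases prefix_append_iff.mp hp with hp | ⟨q, hq, rfl⟩
  · exact hu.2 p hp
  · simpa [hu.1] using hv.2 q hq

theorem balanced_flatten {ws : List (List (α ⊕ Bool))} (h : ∀ u ∈ ws, Balanced u) :
    Balanced ws.flatten := by
  induction ws with
  | nil => exact balanced_nil
  | cons u ws ih =>
    exact (h u mem_cons_self).append (ih fun v hv => h v (mem_cons_of_mem u hv))

theorem IsBlock.balanced (h : IsBlock w) : Balanced w := by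
  refine ⟨h.2.1, fun p hp => ?_⟩
  by_cases hp₀ : p = []
  · simp [hp₀]
  by_cases hpw : p = w
  · simp [hpw, h.2.1]
  exact (h.2.2 p hp hp₀ hpw).le

theorem isBlock_singleton (a : α) : IsBlock [Sum.inl a] := by
  refine ⟨by simp, by simp, fun p hp hp₀ hpa => ?_⟩
  rcases prefix_cons_iff.mp hp with rfl | ⟨q, rfl, hq⟩
  · exact absurd rfl hp₀
  · obtain rfl := prefix_nil.mp hq
    exact absurd rfl hpa

theorem Balanced.isBlock_bracket (h : Balanced w) :
    IsBlock (Sum.inr false :: w ++ [Sum.inr true]) := by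
  refine ⟨by simp, by simp [h.1], fun p hp hp₀ hpw => ?_⟩
  rcases prefix_cons_iff.mp hp with rfl | ⟨q, rfl, hq⟩
  · exact absurd rfl hp₀
  rcases prefix_append_iff.mp hq with hqw | ⟨c, hc, rfl⟩
  · have := h.2 q hqw
    simp only [depth_cons, weight]
    omega
  rcases prefix_cons_iff.mp hc with rfl | ⟨d, rfl, hd⟩
  · simp [h.1]
  · obtain rfl := prefix_nil.mp hd
    exact absurd rfl hpw

theorem IsBlock.eq_of_prefix (hu : IsBlock u) (hv : IsBlock v) (h : u <+: v) : u = v := by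
  by_contra huv
  simpa [hu.2.1] using hv.2.2 u h hu.1 huv

theorem IsBlock.eq_of_append_eq_append {s t : List (α ⊕ Bool)} (hu : IsBlock u) (hv : IsBlock v)
    (h : u ++ s = v ++ t) : u = v := by
  rcases prefix_or_prefix_of_prefix (prefix_append u s) (h ▸ prefix_append v t) with huv | hvu
  · exact hu.eq_of_prefix hv huv
  · exact (hv.eq_of_prefix hu hvu).symm

theorem flatten_inj_of_isBlock {ws ws' : List (List (α ⊕ Bool))} (h : ∀ u ∈ ws, IsBlock u)
    (h' : ∀ u ∈ ws', IsBlock u) (heq : ws.flatten = ws'.flatten) : ws = ws' := by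
  induction ws generalizing ws' with
  | nil =>
    cases ws' with
    | nil => rfl
    | cons u' ws' => exact absurd (append_eq_nil_iff.mp heq.symm).1 (h' u' mem_cons_self).1
  | cons u ws ih =>
    cases ws' with
    | nil => exact absurd (append_eq_nil_iff.mp heq).1 (h u mem_cons_self).1
    | cons u' ws' =>
      obtain rfl := (h u mem_cons_self).eq_of_append_eq_append (h' u' mem_cons_self) heq
      rw [ih (fun v hv => h v (mem_cons_of_mem u hv)) (fun v hv => h' v (mem_cons_of_mem u hv))
        (append_cancel_left heq)]

theorem length_lt_length_bracket {ws : List (List (α ⊕ Bool))} (hu : u ∈ ws) :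
    u.length < (Sum.inr false :: ws.flatten ++ [Sum.inr true]).length := by
  have := (sublist_flatten_of_mem hu).length_le
  simp only [length_cons, length_append]
  omega

end words

section grammars

variable {α : Type} {N N' : Type*}

def IsInner (s : Symbol (α ⊕ Bool) N) : Prop :=
  (∃ A, s = .nonterminal A) ∨ ∃ a, s = .terminal (.inl a)

/-- `IsParenthesisGrammar G` says exactly that every right-hand side of `G` is bracketed. -/
def IsBracketed (o : List (Symbol (α ⊕ Bool) N)) : Prop :=
  ∃ mid, o = .terminal (.inr false) :: mid ++ [.terminal (.inr true)] ∧ ∀ s ∈ mid, IsInner s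

theorem isInner_map {f : N → N'} {s : Symbol (α ⊕ Bool) N} : IsInner (s.map f) ↔ IsInner s := by
  cases s <;> simp [IsInner]

theorem isBracketed_map_iff {f : N → N'} {o : List (Symbol (α ⊕ Bool) N)} :
    IsBracketed (o.map (Symbol.map f)) ↔ IsBracketed o := by
  constructor
  · rintro ⟨mid, ho, hmid⟩
    obtain ⟨x, o, rfl, hx, ho⟩ := map_eq_cons_iff.mp ho
    obtain ⟨m, l, rfl, rfl, hl⟩ := map_eq_append_iff.mp ho
    obtain ⟨y, rfl, hy⟩ := map_eq_singleton_iff.mp hl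
    rw [Symbol.map_eq_terminal_iff] at hx hy
    subst hx hy
    exact ⟨m, rfl, fun s hs => isInner_map.mp (hmid _ (mem_map_of_mem hs))⟩
  · rintro ⟨mid, rfl, hmid⟩
    refine ⟨mid.map (Symbol.map f), by simp, fun s hs => ?_⟩
    obtain ⟨s₀, hs₀, rfl⟩ := mem_map.mp hs
    exact isInner_map.mpr (hmid s₀ hs₀)

theorem derives_bracket {G : ContextFreeGrammar (α ⊕ Bool)} {r : ContextFreeRule (α ⊕ Bool) G.NT}
    (hr : r ∈ G.rules) {mid : List (Symbol (α ⊕ Bool) G.NT)} {ws : List (List (α ⊕ Bool))}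
    (hout : r.output = .terminal (.inr false) :: mid ++ [.terminal (.inr true)])
    (hf : Forall₂ (fun s u => G.Derives [s] (u.map .terminal)) mid ws) :
    G.Derives [.nonterminal r.input]
      ((Sum.inr false :: ws.flatten ++ [Sum.inr true]).map .terminal) := by
  refine derives_nonterminal_terminals_iff.mpr ⟨r, hr, rfl, ?_⟩
  rw [hout]
  refine derives_terminals_iff_forall₂.mpr ⟨[Sum.inr false] :: ws ++ [[Sum.inr true]], by simp, ?_⟩
  exact rel_append (.cons (.refl _) hf) (.cons (.refl _) .nil)

end grammars

end Parenthesis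

namespace IsParenthesisGrammar

open ContextFreeGrammar Parenthesis

section analysis

variable {α : Type} {G : ContextFreeGrammar (α ⊕ Bool)} (hG : IsParenthesisGrammar G)
include hG

theorem exists_rule_of_derives {A : G.NT} {w : List (α ⊕ Bool)}
    (h : G.Derives [.nonterminal A] (w.map .terminal)) :
    ∃ r ∈ G.rules, r.input = A ∧ ∃ mid ws,
      r.output = .terminal (.inr false) :: mid ++ [.terminal (.inr true)] ∧
      (∀ s ∈ mid, IsInner s) ∧ w = Sum.inr false :: ws.flatten ++ [Sum.inr true] ∧
      Forall₂ (fun s u => G.Derives [s] (u.map .terminal)) mid ws := by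
  obtain ⟨r, hr, rfl, hd⟩ := derives_nonterminal_terminals_iff.mp h
  obtain ⟨mid, hout, hmid⟩ := hG r hr
  rw [hout, ← singleton_append, append_assoc, derives_append_terminals_iff] at hd
  obtain ⟨w₀, w', rfl, h₀, hd⟩ := hd
  obtain ⟨w₁, w₂, rfl, h₁, h₂⟩ := derives_append_terminals_iff.mp hd
  obtain ⟨ws, rfl, hf⟩ := derives_terminals_iff_forall₂.mp h₁
  obtain rfl := (derives_terminals_iff (v := [Sum.inr false])).mp h₀
  obtain rfl := (derives_terminals_iff (v := [Sum.inr true])).mp h₂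
  exact ⟨r, hr, rfl, mid, ws, hout, hmid, by simp, hf⟩

theorem ne_singleton_of_derives {A : G.NT} {w : List (α ⊕ Bool)}
    (h : G.Derives [.nonterminal A] (w.map .terminal)) (a : α) : w ≠ [Sum.inl a] := by
  obtain ⟨-, -, -, -, ws, -, -, rfl, -⟩ := exists_rule_of_derives hG h
  simp

theorem isBlock_of_derives {s : Symbol (α ⊕ Bool) G.NT} (hs : IsInner s) {u : List (α ⊕ Bool)}
    (h : G.Derives [s] (u.map .terminal)) : IsBlock u := by
  rcases hs with ⟨A, rfl⟩ | ⟨a, rfl⟩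
  · obtain ⟨-, -, -, mid, ws, -, hmid, hu, hf⟩ := exists_rule_of_derives hG h
    rw [hu]
    refine Balanced.isBlock_bracket (balanced_flatten fun v hv => ?_)
    obtain ⟨s, hs, hsv⟩ := hf.exists_of_mem_right hv
    exact (isBlock_of_derives (hmid s hs) hsv).balanced
  · rw [(derives_terminals_iff (v := [Sum.inl a])).mp h]
    exact isBlock_singleton a
termination_by u.length
decreasing_by exact hu ▸ length_lt_length_bracket hv

theorem forall_isBlock_of_forall₂ {mid : List (Symbol (α ⊕ Bool) G.NT)}
    {ws : List (List (α ⊕ Bool))} (hmid : ∀ s ∈ mid, IsInner s)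
    (hf : Forall₂ (fun s u => G.Derives [s] (u.map .terminal)) mid ws) : ∀ u ∈ ws, IsBlock u :=
  fun _ hu =>
    let ⟨s, hs, hsu⟩ := hf.exists_of_mem_right hu
    isBlock_of_derives hG (hmid s hs) hsu

end analysis

section closure

variable {α : Type}

theorem iUnion {ι : Type} [Fintype ι] {G : ι → ContextFreeGrammar (α ⊕ Bool)}
    (hG : ∀ i, IsParenthesisGrammar (G i)) :
    IsParenthesisGrammar (ContextFreeGrammar.iUnion G) := by
  intro r hr
  obtain ⟨i, ⟨r₀, hr₀, rfl⟩ | ⟨r₀, hr₀, -, rfl⟩⟩ := mem_iUnion_rules.mp hr <;>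
    exact isBracketed_map_iff.mpr (hG i r₀ hr₀)

variable {G₁ G₂ : ContextFreeGrammar (α ⊕ Bool)}

theorem prod (hG₁ : IsParenthesisGrammar G₁) : IsParenthesisGrammar (G₁.prod G₂) :=
  fun _ hr => isBracketed_map_iff.mp (hG₁ _ (mem_prod_rules.mp hr).1)

variable (hG₁ : IsParenthesisGrammar G₁) (hG₂ : IsParenthesisGrammar G₂)
include hG₁ hG₂

theorem exists_symbol_prod {s₁ : Symbol (α ⊕ Bool) G₁.NT} {s₂ : Symbol (α ⊕ Bool) G₂.NT}
    {u : List (α ⊕ Bool)} (hs₁ : IsInner s₁) (hs₂ : IsInner s₂)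
    (h₁ : G₁.Derives [s₁] (u.map .terminal)) (h₂ : G₂.Derives [s₂] (u.map .terminal))
    (ih : ∀ C D, G₁.Derives [.nonterminal C] (u.map .terminal) →
      G₂.Derives [.nonterminal D] (u.map .terminal) →
        (G₁.prod G₂).Derives [.nonterminal (C, D)] (u.map .terminal)) :
    ∃ s : Symbol (α ⊕ Bool) (G₁.NT × G₂.NT), s.map Prod.fst = s₁ ∧ s.map Prod.snd = s₂ ∧
      (G₁.prod G₂).Derives [s] (u.map .terminal) := by
  rcases hs₁ with ⟨C, rfl⟩ | ⟨a, rfl⟩ <;> rcases hs₂ with ⟨D, rfl⟩ | ⟨b, rfl⟩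
  · exact ⟨.nonterminal (C, D), rfl, rfl, ih C D h₁ h₂⟩
  · exact absurd ((derives_terminals_iff (v := [Sum.inl b])).mp h₂)
      (ne_singleton_of_derives hG₁ h₁ b)
  · exact absurd ((derives_terminals_iff (v := [Sum.inl a])).mp h₁)
      (ne_singleton_of_derives hG₂ h₂ a)
  · obtain rfl := (derives_terminals_iff (v := [Sum.inl a])).mp h₁
    obtain rfl : a = b := by simpa using (derives_terminals_iff (v := [Sum.inl b])).mp h₂
    exact ⟨.terminal (.inl a), rfl, rfl, .refl _⟩

theorem exists_forall₂_prod {mid₁ : List (Symbol (α ⊕ Bool) G₁.NT)}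
    {mid₂ : List (Symbol (α ⊕ Bool) G₂.NT)} {ws : List (List (α ⊕ Bool))}
    (hmid₁ : ∀ s ∈ mid₁, IsInner s) (hmid₂ : ∀ s ∈ mid₂, IsInner s)
    (hf₁ : Forall₂ (fun s u => G₁.Derives [s] (u.map .terminal)) mid₁ ws)
    (hf₂ : Forall₂ (fun s u => G₂.Derives [s] (u.map .terminal)) mid₂ ws)
    (ih : ∀ u ∈ ws, ∀ C D, G₁.Derives [.nonterminal C] (u.map .terminal) →
      G₂.Derives [.nonterminal D] (u.map .terminal) →
        (G₁.prod G₂).Derives [.nonterminal (C, D)] (u.map .terminal)) :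
    ∃ mid : List (Symbol (α ⊕ Bool) (G₁.NT × G₂.NT)),
      mid.map (Symbol.map Prod.fst) = mid₁ ∧ mid.map (Symbol.map Prod.snd) = mid₂ ∧
      Forall₂ (fun s u => (G₁.prod G₂).Derives [s] (u.map .terminal)) mid ws := by
  induction ws generalizing mid₁ mid₂ with
  | nil =>
    obtain rfl := forall₂_nil_right_iff.mp hf₁
    obtain rfl := forall₂_nil_right_iff.mp hf₂
    exact ⟨[], rfl, rfl, .nil⟩
  | cons u ws ihws =>
    obtain ⟨s₁, mid₁', h₁, hf₁', rfl⟩ := forall₂_cons_right_iff.mp hf₁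
    obtain ⟨s₂, mid₂', h₂, hf₂', rfl⟩ := forall₂_cons_right_iff.mp hf₂
    obtain ⟨s, rfl, rfl, hs⟩ := exists_symbol_prod hG₁ hG₂ (hmid₁ s₁ mem_cons_self)
      (hmid₂ s₂ mem_cons_self) h₁ h₂ (ih u mem_cons_self)
    obtain ⟨mid, rfl, rfl, hf⟩ := ihws (fun s hs => hmid₁ s (mem_cons_of_mem _ hs))
      (fun s hs => hmid₂ s (mem_cons_of_mem _ hs)) hf₁' hf₂'
      (fun v hv => ih v (mem_cons_of_mem _ hv))
    exact ⟨s :: mid, rfl, rfl, .cons hs hf⟩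

theorem derives_prod {A : G₁.NT} {B : G₂.NT} {w : List (α ⊕ Bool)}
    (h₁ : G₁.Derives [.nonterminal A] (w.map .terminal))
    (h₂ : G₂.Derives [.nonterminal B] (w.map .terminal)) :
    (G₁.prod G₂).Derives [.nonterminal (A, B)] (w.map .terminal) := by
  obtain ⟨r₁, hr₁, rfl, mid₁, ws, hout₁, hmid₁, hw, hf₁⟩ := exists_rule_of_derives hG₁ h₁
  obtain ⟨r₂, hr₂, rfl, mid₂, ws₂, hout₂, hmid₂, hw₂, hf₂⟩ := exists_rule_of_derives hG₂ h₂
  obtain rfl : ws₂ = ws := flatten_inj_of_isBlock (forall_isBlock_of_forall₂ hG₂ hmid₂ hf₂)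
    (forall_isBlock_of_forall₂ hG₁ hmid₁ hf₁) (by simpa [hw] using hw₂.symm)
  obtain ⟨mid, hmid_fst, hmid_snd, hf⟩ := exists_forall₂_prod hG₁ hG₂ hmid₁ hmid₂ hf₁ hf₂
    fun u hu C D d₁ d₂ => derives_prod d₁ d₂
  let r : ContextFreeRule (α ⊕ Bool) (G₁.NT × G₂.NT) :=
    ⟨(r₁.input, r₂.input), .terminal (.inr false) :: mid ++ [.terminal (.inr true)]⟩
  have hr_fst : r.map Prod.fst = r₁ :=
    ContextFreeRule.ext rfl (by simp [r, ContextFreeRule.map, hout₁, ← hmid_fst])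
  have hr_snd : r.map Prod.snd = r₂ :=
    ContextFreeRule.ext rfl (by simp [r, ContextFreeRule.map, hout₂, ← hmid_snd])
  have hr : r ∈ (G₁.prod G₂).rules := mem_prod_rules.mpr ⟨hr_fst ▸ hr₁, hr_snd ▸ hr₂⟩
  rw [hw]
  exact derives_bracket hr rfl hf
termination_by w.length
decreasing_by exact hw ▸ length_lt_length_bracket hu

theorem language_prod : (G₁.prod G₂).language = G₁.language ⊓ G₂.language :=
  le_antisymm language_prod_le fun w ⟨h₁, h₂⟩ =>
    (mem_language_iff _ w).mpr (derives_prod hG₁ hG₂ ((mem_language_iff _ w).mp h₁)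
      ((mem_language_iff _ w).mp h₂))

end closure

end IsParenthesisGrammar

/-- **McNaughton's closure theorem for parenthesis languages (union and intersection).**
If `L₁` and `L₂` are generated by parenthesis grammars over the same terminal alphabet
`Σ ∪ {[, ]}`, then `L₁ ∪ L₂` and `L₁ ∩ L₂` are also generated by parenthesis grammars. -/
theorem parenthesis_closed_under_union_and_intersection {α : Type}
    (G₁ G₂ : ContextFreeGrammar.{0} (α ⊕ Bool))
    (h₁ : IsParenthesisGrammar G₁) (h₂ : IsParenthesisGrammar G₂) :
    (∃ G : ContextFreeGrammar.{0} (α ⊕ Bool),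
        IsParenthesisGrammar G ∧ G.language = G₁.language ⊔ G₂.language) ∧
    (∃ G : ContextFreeGrammar.{0} (α ⊕ Bool),
        IsParenthesisGrammar G ∧ G.language = G₁.language ⊓ G₂.language) :=
  ⟨⟨ContextFreeGrammar.iUnion fun b => cond b G₁ G₂,
      IsParenthesisGrammar.iUnion (Bool.forall_bool.mpr ⟨h₂, h₁⟩),
      by rw [ContextFreeGrammar.language_iUnion, iSup_bool_eq]; rfl⟩,
    ⟨G₁.prod G₂, IsParenthesisGrammar.prod h₁, IsParenthesisGrammar.language_prod h₁ h₂⟩⟩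
end
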